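/- In a perfect REL-algebra, let a, b, c be atoms with a ≤ b;c. Then a;1' ≠ 0 if and only if c;1' ≠ 0, and in that case Ea = Ec. -/
import Mathlib

class PerfectREL (α : Type*) [CompleteBooleanAlgebra α] [IsAtomic α] where
  comp : α → α → α
  conv : α → α
  id' : α
  ax2 : ∀ x y : α, conv (x ⊓ conv y) = conv x ⊓ y
  ax3l : ∀ x y z : α, comp (x ⊔ y) z = comp x z ⊔ comp y z
  ax3r : ∀ x y z : α, comp x (y ⊔ z) = comp x y ⊔ comp x z
  ax4l : comp (⊤ : α) ⊥ = ⊥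
  ax4r : comp (⊥ : α) ⊤ = ⊥
  ax5l : ∀ x y z : α, comp (conv x) y ⊓ z = comp (conv x) (y ⊓ comp (conv (conv x)) z) ⊓ z
  ax5r : ∀ x y z : α, comp x (conv y) ⊓ z = comp (x ⊓ comp z (conv (conv y))) (conv y) ⊓ z
  ax6l : ∀ x : α, comp id' x ≤ x
  ax6r : ∀ x : α, comp x id' ≤ x
  ax7 : comp (id' : α) id' = id'
  ax8 : comp ((conv (⊤ : α))ᶜ) ((conv (⊤ : α))ᶜ) ⊓ id' = ⊥
  ax9a : ∀ x y z : α, comp (comp (x ⊓ id') y) z = comp (x ⊓ id') (comp y z)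
  ax9b : ∀ x y z : α, comp (comp x (y ⊓ id')) z = comp x (comp (y ⊓ id') z)
  ax9c : ∀ x y z : α, comp (comp x y) (z ⊓ id') = comp x (comp y (z ⊓ id'))
  conv_sSup : ∀ S : Set α, conv (sSup S) = ⨆ x ∈ S, conv x
  comp_sSup_left : ∀ (S : Set α) (y : α), comp (sSup S) y = ⨆ x ∈ S, comp x y
  comp_sSup_right : ∀ (x : α) (S : Set α), comp x (sSup S) = ⨆ y ∈ S, comp x y

open PerfectREL

variable {α : Type*} [CompleteBooleanAlgebra α] [IsAtomic α] [PerfectREL α]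

-- basic facts
lemma comp_bot_right (x : α) : comp x (⊥ : α) = ⊥ := by
  have := comp_sSup_right x (∅ : Set α)
  simpa using this

lemma comp_bot_left (x : α) : comp (⊥ : α) x = ⊥ := by
  have := comp_sSup_left (∅ : Set α) x
  simpa using this

lemma conv_bot : conv (⊥ : α) = ⊥ := by
  have := conv_sSup (∅ : Set α)
  simpa using this

lemma comp_mono_left {x x' : α} (y : α) (hx : x ≤ x') : comp x y ≤ comp x' y := by
  have h : comp (x ⊔ x') y = comp x y ⊔ comp x' y := ax3l x x' y
  rw [sup_eq_right.2 hx] at h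
  rw [h]; exact le_sup_left

lemma comp_mono_right (x : α) {y y' : α} (hy : y ≤ y') : comp x y ≤ comp x y' := by
  have h : comp x (y ⊔ y') = comp x y ⊔ comp x y' := ax3r x y y'
  rw [sup_eq_right.2 hy] at h
  rw [h]; exact le_sup_left

lemma conv_mono {x x' : α} (hx : x ≤ x') : conv x ≤ conv x' := by
  have h1 := conv_sSup ({x, x'} : Set α)
  rw [sSup_pair, sup_eq_right.2 hx] at h1
  rw [h1, iSup_insert, iSup_singleton]
  exact le_sup_left

lemma conv_conv (y : α) : conv (conv y) = conv (⊤ : α) ⊓ y := by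
  have := ax2 (⊤ : α) y
  simpa using this

-- atomisticity below id'
lemma id_eq_sSup_atoms : (id' : α) = sSup {e : α | IsAtom e ∧ e ≤ id'} := by
  set s := sSup {e : α | IsAtom e ∧ e ≤ id'} with hs
  have hle : s ≤ (id' : α) := sSup_le fun e he => he.2
  refine le_antisymm ?_ hle
  rw [← sdiff_eq_bot_iff]
  by_contra hne
  rcases (IsAtomic.eq_bot_or_exists_atom_le ((id' : α) \ s)).resolve_left hne with ⟨e, he, hes⟩
  have h1 : e ≤ (id' : α) := hes.trans sdiff_le
  have h2 : e ≤ s := le_sSup ⟨he, h1⟩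
  have h3 : e ≤ sᶜ := by rw [sdiff_eq] at hes; exact hes.trans inf_le_right
  exact he.1 (le_bot_iff.mp (by simpa using le_inf h2 h3))

lemma comp_le_left {x e : α} (he : e ≤ id') : comp x e ≤ x :=
  (comp_mono_right x he).trans (ax6r x)

lemma comp_le_right {x e : α} (he : e ≤ id') : comp e x ≤ x :=
  (comp_mono_left x he).trans (ax6l x)

lemma assoc_sub_id {e : α} (he : e ≤ id') (x z : α) :
    comp (comp x e) z = comp x (comp e z) := by
  have := ax9b x e z
  rwa [inf_eq_left.2 he] at this

lemma assoc_sub_id' {e : α} (he : e ≤ id') (x y : α) :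
    comp (comp x y) e = comp x (comp y e) := by
  have := ax9c x y e
  rwa [inf_eq_left.2 he] at this

/-- sub-identity atoms that occur as right units are idempotent -/
lemma idem_of_unit {e c : α} (hea : IsAtom e) (he1 : e ≤ id') (hc : c ≠ ⊥)
    (hce : comp c e = c) : comp e e = e := by
  have hle : comp e e ≤ e := comp_le_left he1
  rcases (hea.le_iff.mp hle) with hb | he
  · exfalso
    have h9 : comp (comp c e) e = comp c (comp e e) := assoc_sub_id he1 c e
    rw [hce, hce, hb, comp_bot_right] at h9
    exact hc h9
  · exact he

/-- idempotent sub-identity atoms are fixed by conversion -/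
lemma conv_id_atom {e : α} (hea : IsAtom e) (he1 : e ≤ id') (hee : comp e e = e) :
    conv e = e := by
  have het : e ≤ conv (⊤ : α) := by
    by_contra hnot
    have hmeet : e ⊓ conv (⊤ : α) = ⊥ := by
      rcases hea.le_iff.mp (inf_le_left : e ⊓ conv (⊤ : α) ≤ e) with hb | hx
      · exact hb
      · exact absurd (hx ▸ (inf_le_right : e ⊓ conv (⊤ : α) ≤ conv (⊤ : α))) hnot
    have hcompl : e ≤ (conv (⊤ : α))ᶜ :=
      le_compl_iff_disjoint_right.mpr (disjoint_iff.mpr hmeet)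
    have : e ≤ comp ((conv (⊤ : α))ᶜ) ((conv (⊤ : α))ᶜ) ⊓ id' := by
      refine le_inf ?_ he1
      calc e = comp e e := hee.symm
        _ ≤ comp ((conv (⊤ : α))ᶜ) ((conv (⊤ : α))ᶜ) :=
          (comp_mono_left e hcompl).trans (comp_mono_right _ hcompl)
    rw [ax8] at this
    exact hea.1 (le_bot_iff.mp this)
  have hcc : conv (conv e) = e := by rw [conv_conv, inf_eq_right.2 het]
  have hd_ne : conv e ≠ ⊥ := fun hb => hea.1 (by rw [← hcc, hb, conv_bot])
  have hdt : conv e ≤ conv (⊤ : α) := by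
    have h1 : conv (conv (conv e)) = conv e := by rw [hcc]
    rw [conv_conv] at h1
    rw [← h1]; exact inf_le_left
  have hda : IsAtom (conv e) := by
    refine ⟨hd_ne, fun x hx => ?_⟩
    by_contra hxne
    have hxd : x ≤ conv e := hx.le
    have h1 : conv x ≤ e := hcc ▸ conv_mono hxd
    have hxt : x ≤ conv (⊤ : α) := hxd.trans hdt
    have hccx : conv (conv x) = x := by rw [conv_conv, inf_eq_right.2 hxt]
    have h2 : conv x ≠ ⊥ := fun hb => hxne (by rw [← hccx, hb, conv_bot])
    have h3 : conv x = e := (hea.le_iff.mp h1).resolve_left h2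
    exact absurd (by rw [← hccx, h3]) (ne_of_lt hx)
  -- key instance of ax5r with y := conv e
  have key : ∀ x z : α, comp x e ⊓ z = comp (x ⊓ comp z (conv e)) e ⊓ z := by
    intro x z
    have h5 := ax5r x (conv e) z
    rw [hcc] at h5
    exact h5
  have h1e : comp id' e = e := by
    refine le_antisymm (ax6l e) ?_
    calc e = comp e e := hee.symm
      _ ≤ comp id' e := comp_mono_left e he1
  have step := key id' e
  rw [h1e, inf_idem] at step
  have hne2 : id' ⊓ comp e (conv e) ≠ ⊥ := fun hb =>
    hea.1 (by rw [step, hb, comp_bot_left, bot_inf_eq])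
  have hedne : comp e (conv e) ≠ ⊥ := fun hb => hne2 (by rw [hb, inf_bot_eq])
  have hed : comp e (conv e) = conv e :=
    (hda.le_iff.mp (comp_le_right he1)).resolve_left hedne
  have hd1 : conv e ≤ id' := by
    rcases hda.le_iff.mp (inf_le_left : conv e ⊓ id' ≤ conv e) with hb | hx
    · exact absurd (by rw [← hed] at hb; rw [inf_comm] at hb; exact hb) hne2
    · exact hx ▸ (inf_le_right : conv e ⊓ id' ≤ id')
  have hdle : conv e ≤ e := hed ▸ comp_le_left hd1
  exact (hea.le_iff.mp hdle).resolve_left hd_ne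

/-- atoms below x;e absorb e on the right -/
lemma atom_comp_unit {e x a : α} (hea : IsAtom e) (he1 : e ≤ id') (hee : comp e e = e)
    (haa : IsAtom a) (hax : a ≤ comp x e) : comp a e = a := by
  have hce : conv e = e := conv_id_atom hea he1 hee
  have key := ax5r x e a
  rw [hce, hce] at key
  rw [inf_eq_right.2 hax] at key
  have hne : comp a e ≠ ⊥ := by
    intro hb
    rw [hb, inf_bot_eq, comp_bot_left, bot_inf_eq] at key
    exact haa.1 key
  exact (haa.le_iff.mp (comp_le_left he1)).resolve_left hne

theorem E_compat (a b c : α) (ha : IsAtom a) (hb : IsAtom b) (hc : IsAtom c)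
    (h : a ≤ comp b c) :
    (comp a id' ≠ (⊥ : α) ↔ comp c id' ≠ (⊥ : α)) ∧
      ∀ ea ec : α, IsAtom ea → ea ≤ id' → comp a ea = a →
        IsAtom ec → ec ≤ id' → comp c ec = c → ea = ec := by
  constructor
  · constructor
    · -- a;1' ≠ ⊥ → c;1' ≠ ⊥, by contraposition
      intro hane
      intro hcb
      apply hane
      have h1 : comp a id' ≤ comp (comp b c) id' := comp_mono_left id' h
      have h2 : comp (comp b c) id' = comp b (comp c id') := by
        have := ax9c b c id'
        rwa [inf_idem] at this
      rw [h2, hcb, comp_bot_right] at h1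
      exact le_bot_iff.mp h1
    · -- c;1' ≠ ⊥ → a;1' ≠ ⊥
      intro hcne
      -- find an atom e ≤ 1' with comp c e ≠ ⊥
      have hex : ∃ e : α, IsAtom e ∧ e ≤ id' ∧ comp c e ≠ ⊥ := by
        by_contra hno
        push_neg at hno
        apply hcne
        have := comp_sSup_right c {e : α | IsAtom e ∧ e ≤ id'}
        rw [← id_eq_sSup_atoms] at this
        rw [this]
        refine le_bot_iff.mp (iSup_le fun e => iSup_le fun he => ?_)
        rw [hno e he.1 he.2]
      rcases hex with ⟨e, hea, he1, hcene⟩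
      have hce : comp c e = c :=
        (hc.le_iff.mp (comp_le_left he1)).resolve_left hcene
      have hee : comp e e = e := idem_of_unit hea he1 hc.1 hce
      have haxe : a ≤ comp (comp b c) e := by
        rw [assoc_sub_id' he1 b c]
        calc a ≤ comp b c := h
          _ = comp b (comp c e) := by rw [hce]
      have hae : comp a e = a := atom_comp_unit hea he1 hee ha haxe
      intro hb2
      apply ha.1
      have : comp a e ≤ comp a id' := comp_mono_right a he1
      rw [hae, hb2] at this
      exact le_bot_iff.mp this
  · -- uniqueness part
    intro ea ec heaa hea1 haea heca hec1 hcec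
    by_contra hne
    have hmeet : ea ⊓ ec = ⊥ := by
      rcases heaa.le_iff.mp (inf_le_left : ea ⊓ ec ≤ ea) with hb | hx
      · exact hb
      · exfalso
        rcases heca.le_iff.mp (inf_le_right : ea ⊓ ec ≤ ec) with hb2 | hx2
        · exact heaa.1 (hx ▸ hb2)
        · exact hne (hx.symm.trans hx2)
    have hcomp : comp ec ea = ⊥ := by
      have h1 : comp ec ea ≤ ec := comp_le_left hea1
      have h2 : comp ec ea ≤ ea := comp_le_right hec1
      have := le_inf h2 h1
      rw [hmeet] at this
      exact le_bot_iff.mp this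
    apply ha.1
    have step1 : a ≤ comp (comp b c) ec := by
      calc a = comp a ea := haea.symm
        _ ≤ comp a id' := comp_mono_right a hea1
        _ ≤ a := ax6r a
        _ ≤ comp b c := h
        _ = comp b (comp c ec) := by rw [hcec]
        _ = comp (comp b c) ec := (assoc_sub_id' hec1 b c).symm
    have step2 : a ≤ comp (comp (comp b c) ec) ea := by
      calc a = comp a ea := haea.symm
        _ ≤ comp (comp (comp b c) ec) ea := comp_mono_left ea step1
    rw [assoc_sub_id hec1 (comp b c) ea, hcomp, comp_bot_right] at step2
    exact le_bot_iff.mp step2
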